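/- Let n ≥ 1 and s ≥ 3 be integers, let P_n(x) = (1/n!)·(d/dx)^n (x^n(1−x)^n) be the shifted Legendre polynomial, let Q_n(x) = (1−x)^n, and let T_n(x) = c₀ + c₁x + ⋯ + c_n x^n be a polynomial with real coefficients, with c* = max_{0 ≤ i ≤ n} |c_i|. Then the s-fold integral I_s = ∫₀¹⋯∫₀¹ P_n(x₁)Q_n(x₂)T_n(x₃)/(1 − x₁x₂x₃⋯x_s) dx₁⋯dx_s satisfies |I_s| ≤ (c*/2)·B(n, n+1), where B denotes the Euler Beta function. -/

import Mathlib

open MeasureTheory Finset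

/-- The shifted Legendre polynomial `P_n(x) = (1/n!) (d/dx)^n (x^n (1-x)^n)`. -/
noncomputable def shiftedLegendre (n : ℕ) (x : ℝ) : ℝ :=
  (1 / (n.factorial : ℝ)) * iteratedDeriv n (fun y : ℝ => y ^ n * (1 - y) ^ n) x

/-- The Euler Beta function `B(x, y) = Γ(x)Γ(y)/Γ(x+y)`. -/
noncomputable def eulerBeta (x y : ℝ) : ℝ :=
  Real.Gamma x * Real.Gamma y / Real.Gamma (x + y)

/-!
Expanding `1 / (1 - x₁⋯x_s)` as a geometric series turns the integral into
`∑ₖ ∏ᵢ ∫₀¹ fᵢ(y) yᵏ dy`. By Rodrigues' formula and `n` integrations by parts, the Legendre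
moment `∫₀¹ P_n(y) yᵏ dy` equals `± C(k, n) B(k+1, n+1)`, which vanishes for `k < n`; the
`Q_n`-moment is `B(k+1, n+1)`, the `T_n`-moment is at most `c* (n+1)/(k+1)`, and the remaining
moments `1/(k+1)` are at most `1`. The elementary inequality
`C(k, n) B(k+1, n+1)² (k+2) ≤ B(n, n+1)/2` for `k ≥ n` then bounds the `k`-th term by
`(c*/2) B(n, n+1) (n+1) (1/(k+1) - 1/(k+2))`, and these bounds telescope to `(c*/2) B(n, n+1)`.
-/

open scoped Nat
open Filter Topology
open Polynomial hiding shiftedLegendre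

section GeometricExpansion

variable {ι : Type*} [Fintype ι]

theorem integral_indicator_Icc_zero_one (f : ℝ → ℝ) :
    ∫ y, (Set.Icc 0 1).indicator f y = ∫ y in (0 : ℝ)..1, f y := by
  rw [integral_indicator measurableSet_Icc, intervalIntegral.integral_of_le zero_le_one,
    integral_Icc_eq_integral_Ioc]

theorem integral_norm_mul_pow_le {f : ℝ → ℝ} (hf : ContinuousOn f (Set.Icc 0 1)) {M : ℝ}
    (hM : ∀ y ∈ Set.Icc (0 : ℝ) 1, ‖f y‖ ≤ M) (k : ℕ) :
    ∫ y in (0 : ℝ)..1, ‖f y * y ^ k‖ ≤ M / (k + 1) :=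
  calc ∫ y in (0 : ℝ)..1, ‖f y * y ^ k‖ ≤ ∫ y in (0 : ℝ)..1, M * y ^ k := by
        refine intervalIntegral.integral_mono_on zero_le_one ?_ ?_ fun y hy => ?_
        · exact (hf.mul (continuousOn_pow k)).norm.intervalIntegrable_of_Icc zero_le_one
        · exact (continuous_const.mul (continuous_pow k)).intervalIntegrable _ _
        · rw [norm_mul, norm_pow, Real.norm_of_nonneg hy.1]
          exact mul_le_mul_of_nonneg_right (hM y hy) (pow_nonneg hy.1 k)
    _ = M / (k + 1) := by simp [integral_pow, div_eq_mul_inv]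

theorem prod_lt_one_of_mem_Icc_of_ne_one {x : ι → ℝ} (hx : x ∈ Set.Icc 0 1) (hx1 : x ≠ 1) :
    ∏ i, x i < 1 := by
  classical
  obtain ⟨i, hi⟩ := Function.ne_iff.mp hx1
  calc ∏ j, x j = x i * ∏ j ∈ univ.erase i, x j := (mul_prod_erase _ _ (mem_univ i)).symm
    _ ≤ x i * 1 := by
      gcongr
      · exact hx.1 i
      · exact prod_le_one (fun j _ => hx.1 j) (fun j _ => hx.2 j)
    _ < 1 := by simpa using lt_of_le_of_ne (hx.2 i) hi

theorem indicator_div_one_sub_prod_ae_eq_tsum [Nonempty ι] (f : ι → ℝ → ℝ) :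
    (Set.Icc (0 : ι → ℝ) 1).indicator (fun x => (∏ i, f i (x i)) / (1 - ∏ i, x i))
      =ᵐ[volume] fun x =>
        ∑' k : ℕ, ∏ i, (Set.Icc 0 1).indicator (fun y => f i y * y ^ k) (x i) := by
  filter_upwards [volume.ae_ne 1] with x hx1
  by_cases hx : x ∈ Set.Icc 0 1
  · have hxi : ∀ i, x i ∈ Set.Icc (0 : ℝ) 1 := fun i => ⟨hx.1 i, hx.2 i⟩
    have hr0 : 0 ≤ ∏ i, x i := prod_nonneg fun i _ => (hxi i).1
    simp only [Set.indicator_of_mem hx, Set.indicator_of_mem (hxi _), prod_mul_distrib, prod_pow,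
      tsum_mul_left, tsum_geometric_of_lt_one hr0 (prod_lt_one_of_mem_Icc_of_ne_one hx hx1),
      div_eq_mul_inv]
  · obtain ⟨i, hi⟩ : ∃ i, x i ∉ Set.Icc (0 : ℝ) 1 := by
      simpa [← Set.pi_univ_Icc] using hx
    have hzero : ∀ k : ℕ, ∏ j, (Set.Icc 0 1).indicator (fun y => f j y * y ^ k) (x j) = 0 :=
      fun k => prod_eq_zero (mem_univ i) (Set.indicator_of_notMem hi _)
    simp [Set.indicator_of_notMem hx, hzero]

theorem integral_Icc_prod_div_one_sub_prod (hι : 2 ≤ Fintype.card ι) {f : ι → ℝ → ℝ}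
    (hf : ∀ i, ContinuousOn (f i) (Set.Icc 0 1)) :
    ∫ x in Set.Icc (0 : ι → ℝ) 1, (∏ i, f i (x i)) / (1 - ∏ i, x i)
      = ∑' k : ℕ, ∏ i, ∫ y in (0 : ℝ)..1, f i y * y ^ k := by
  have : Nonempty ι := Fintype.card_pos_iff.mp (by omega)
  set g : ℕ → ι → ℝ → ℝ := fun k i => (Set.Icc 0 1).indicator (fun y => f i y * y ^ k)
  have hg_int : ∀ k i, Integrable (g k i) :=
    fun k i => ((hf i).mul (continuousOn_pow k)).integrableOn_Icc.integrable_indicator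
      measurableSet_Icc
  choose M hM using fun i => isCompact_Icc.exists_bound_of_continuousOn (hf i)
  have hsummable : Summable fun k => ∫ x : ι → ℝ, ‖∏ i, g k i (x i)‖ := by
    have hdom : Summable fun k : ℕ => (∏ i, M i) * (1 / ((k + 1 : ℕ) : ℝ) ^ Fintype.card ι) :=
      ((summable_nat_add_iff 1).mpr (Real.summable_one_div_nat_pow.mpr hι)).mul_left _
    refine hdom.of_nonneg_of_le (fun k => integral_nonneg fun x => norm_nonneg _) fun k => ?_
    simp_rw [norm_prod]
    rw [integral_fintype_prod_volume_eq_prod (fun i y => ‖g k i y‖)]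
    calc ∏ i, ∫ y, ‖g k i y‖ ≤ ∏ i, M i / (k + 1) :=
          prod_le_prod (fun i _ => integral_nonneg fun y => norm_nonneg _) fun i _ => by
            simpa only [g, norm_indicator_eq_indicator_norm, integral_indicator_Icc_zero_one]
              using integral_norm_mul_pow_le (hf i) (hM i) k
      _ = _ := by simp [div_eq_mul_inv, prod_mul_distrib]
  rw [← integral_indicator measurableSet_Icc,
    integral_congr_ae (indicator_div_one_sub_prod_ae_eq_tsum f)]
  calc ∫ x : ι → ℝ, ∑' k, ∏ i, g k i (x i) = ∑' k, ∫ x : ι → ℝ, ∏ i, g k i (x i) :=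
        (integral_tsum_of_summable_integral_norm
          (fun k => Integrable.fintype_prod (hg_int k)) hsummable).symm
    _ = _ := by simp_rw [integral_fintype_prod_volume_eq_prod, g, integral_indicator_Icc_zero_one]

end GeometricExpansion

section Moments

theorem integral_pow_mul_one_sub_pow (k n : ℕ) :
    ∫ x in (0 : ℝ)..1, x ^ k * (1 - x) ^ n = k ! * n ! / (k + n + 1)! := by
  induction n generalizing k with
  | zero =>
    simp only [pow_zero, mul_one, integral_pow, one_pow, zero_pow k.succ_ne_zero, sub_zero,
      Nat.factorial_zero, add_zero, Nat.factorial_succ]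
    push_cast
    field_simp
  | succ n ih =>
    have hsplit : ∫ x in (0 : ℝ)..1, x ^ k * (1 - x) ^ (n + 1)
        = (∫ x in (0 : ℝ)..1, x ^ k * (1 - x) ^ n)
          - ∫ x in (0 : ℝ)..1, x ^ (k + 1) * (1 - x) ^ n := by
      rw [← intervalIntegral.integral_sub ((by fun_prop : Continuous _).intervalIntegrable _ _)
        ((by fun_prop : Continuous _).intervalIntegrable _ _)]
      congr 1 with x
      ring
    rw [hsplit, ih, ih, show k + 1 + n + 1 = k + n + 1 + 1 by ring,
      show k + (n + 1) + 1 = k + n + 1 + 1 by ring, Nat.factorial_succ (k + n + 1),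
      Nat.factorial_succ k, Nat.factorial_succ n]
    push_cast
    field_simp
    ring

theorem iteratedDeriv_eval (p : ℝ[X]) (m : ℕ) :
    iteratedDeriv m (fun y => p.eval y) = fun y => (derivative^[m] p).eval y := by
  induction m generalizing p with
  | zero => rfl
  | succ m ih =>
    have hderiv : deriv (fun y => p.eval y) = fun y => (derivative p).eval y :=
      funext fun y => Polynomial.deriv p
    rw [iteratedDeriv_succ', Function.iterate_succ_apply, hderiv, ih]

theorem shiftedLegendre_eq_eval (n : ℕ) :
    shiftedLegendre n
      = fun x => 1 / (n ! : ℝ) * (derivative^[n] ((X ^ n * (1 - X) ^ n : ℝ[X]))).eval x := by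
  have hR : (fun y : ℝ => y ^ n * (1 - y) ^ n)
      = fun y => (X ^ n * (1 - X) ^ n : ℝ[X]).eval y := by
    ext y
    simp
  ext x
  rw [shiftedLegendre, hR, iteratedDeriv_eval]

theorem continuous_shiftedLegendre (n : ℕ) : Continuous (shiftedLegendre n) := by
  rw [shiftedLegendre_eq_eval]
  fun_prop

theorem eval_iterate_derivative_eq_zero_of_pow_dvd {R : Type*} [CommRing R] {p q : R[X]} {a : R}
    {n m : ℕ} (hp : p.eval a = 0) (hq : p ^ n ∣ q) (hm : m < n) :
    (derivative^[m] q).eval a = 0 := by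
  have := eval_dvd (x := a) (pow_sub_dvd_iterate_derivative_of_pow_dvd m hq)
  rwa [eval_pow, hp, zero_pow (by omega), zero_dvd_iff] at this

theorem integral_iterate_derivative_mul_eq {R : ℝ[X]} {n : ℕ} (h0 : X ^ n ∣ R)
    (h1 : (1 - X) ^ n ∣ R) {m : ℕ} (hm : m ≤ n) (q : ℝ[X]) :
    ∫ x in (0 : ℝ)..1, (derivative^[m] R).eval x * q.eval x
      = (-1) ^ m * ∫ x in (0 : ℝ)..1, R.eval x * (derivative^[m] q).eval x := by
  induction m generalizing q with
  | zero => simp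
  | succ m ih =>
    have hparts := intervalIntegral.integral_mul_deriv_eq_deriv_mul (a := 0) (b := 1)
      (fun x _ => Polynomial.hasDerivAt q x)
      (fun x _ => Polynomial.hasDerivAt (derivative^[m] R) x)
      ((Polynomial.continuous _).intervalIntegrable _ _)
      ((Polynomial.continuous _).intervalIntegrable _ _)
    rw [eval_iterate_derivative_eq_zero_of_pow_dvd (a := 0) (by simp) h0 (by omega),
      eval_iterate_derivative_eq_zero_of_pow_dvd (a := 1) (by simp) h1 (by omega)] at hparts
    simp only [mul_comm (eval _ q), mul_comm (eval _ (derivative q))] at hparts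
    rw [Function.iterate_succ_apply', Function.iterate_succ_apply, pow_succ', mul_assoc,
      ← ih (by omega), hparts]
    ring

theorem integral_shiftedLegendre_mul_pow (n k : ℕ) :
    ∫ x in (0 : ℝ)..1, shiftedLegendre n x * x ^ k
      = (-1) ^ n * k.choose n * ∫ x in (0 : ℝ)..1, x ^ k * (1 - x) ^ n := by
  have hdesc : ∀ x : ℝ, x ^ n * (1 - x) ^ n * (k.descFactorial n * x ^ (k - n))
      = k.descFactorial n * (x ^ k * (1 - x) ^ n) := by
    intro x
    rcases le_or_gt n k with h | h
    · rw [← Nat.sub_add_cancel h, pow_add, Nat.add_sub_cancel]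
      ring
    · simp [Nat.descFactorial_eq_zero_iff_lt.mpr h]
  simp_rw [shiftedLegendre_eq_eval, mul_assoc, intervalIntegral.integral_const_mul,
    ← eval_X_pow (R := ℝ) (n := k),
    integral_iterate_derivative_mul_eq (dvd_mul_right _ _) (dvd_mul_left _ _) le_rfl,
    iterate_derivative_X_pow_eq_smul]
  simp only [eval_mul, eval_pow, eval_X, eval_sub, eval_one, eval_smul, smul_eq_mul]
  rw [funext hdesc, intervalIntegral.integral_const_mul,
    Nat.descFactorial_eq_factorial_mul_choose]
  push_cast
  field_simp

theorem abs_integral_sum_mul_pow_le {N : ℕ} {c : ℕ → ℝ} {C : ℝ} (hC : ∀ j ∈ range N, |c j| ≤ C)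
    (k : ℕ) : |∫ y in (0 : ℝ)..1, (∑ j ∈ range N, c j * y ^ j) * y ^ k| ≤ C * N / (k + 1) := by
  have hbound : ∀ y ∈ Set.Icc (0 : ℝ) 1, ‖∑ j ∈ range N, c j * y ^ j‖ ≤ C * N := fun y hy =>
    calc ‖∑ j ∈ range N, c j * y ^ j‖ ≤ ∑ j ∈ range N, |c j| * y ^ j := by
          simpa [abs_of_nonneg hy.1] using norm_sum_le (range N) fun j => c j * y ^ j
      _ ≤ ∑ j ∈ range N, C := sum_le_sum fun j hj =>
          (mul_le_of_le_one_right (abs_nonneg _) (pow_le_one₀ hy.1 hy.2)).trans (hC j hj)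
      _ = C * N := by simp [mul_comm]
  exact (intervalIntegral.abs_integral_le_integral_abs zero_le_one).trans
    (integral_norm_mul_pow_le (by fun_prop) hbound k)

end Moments

section Estimates

theorem eulerBeta_natCast_natCast_add_one (n : ℕ) :
    eulerBeta n (n + 1) = n ! ^ 2 / (n * (2 * n)!) := by
  rcases n with _ | m
  · simp [eulerBeta, Real.Gamma_zero]
  have h2 : ((m + 1 : ℕ) : ℝ) + (((m + 1 : ℕ) : ℝ) + 1) = ((2 * (m + 1) : ℕ) : ℝ) + 1 := by
    push_cast; ring
  rw [eulerBeta, h2, Real.Gamma_nat_eq_factorial, Real.Gamma_nat_eq_factorial,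
    show ((m + 1 : ℕ) : ℝ) = (m : ℝ) + 1 by push_cast; ring, Real.Gamma_nat_eq_factorial,
    Nat.factorial_succ m]
  push_cast
  field_simp

theorem hasSum_sub_succ_of_antitone {u : ℕ → ℝ} (hu : Antitone u) (h : Tendsto u atTop (𝓝 0)) :
    HasSum (fun k => u k - u (k + 1)) (u 0) := by
  rw [hasSum_iff_tendsto_nat_of_nonneg fun k => sub_nonneg.2 (hu k.le_succ)]
  simp_rw [Finset.sum_range_sub']
  simpa using tendsto_const_nhds.sub h

theorem hasSum_one_div_max_add_one_sub (n : ℕ) :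
    HasSum (fun k : ℕ => 1 / ((max k n : ℕ) + 1 : ℝ) - 1 / ((max (k + 1) n : ℕ) + 1 : ℝ))
      (1 / (n + 1)) := by
  have hanti : Antitone fun k : ℕ => 1 / ((max k n : ℕ) + 1 : ℝ) := fun a b hab => by
    dsimp only
    gcongr
  have hlim : Tendsto (fun k : ℕ => 1 / ((max k n : ℕ) + 1 : ℝ)) atTop (𝓝 0) :=
    tendsto_one_div_add_atTop_nhds_zero_nat.comp
      (tendsto_atTop_mono (fun k => le_max_left k n) tendsto_id)
  simpa using hasSum_sub_succ_of_antitone hanti hlim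

theorem choose_mul_factorial_div_le (k n : ℕ) :
    (k.choose n : ℝ) * (k ! * n ! / (k + n + 1)!) ≤ 1 / (k + n + 1) := by
  have h : k.choose n * k ! * n ! ≤ (k + n)! :=
    calc k.choose n * k ! * n ! ≤ (k + n).choose n * k ! * n ! := by
          gcongr
          exact Nat.le_add_right k n
      _ = (k + n)! := Nat.add_choose_mul_factorial_mul_factorial k n
  have h' : (k.choose n * k ! * n ! : ℝ) ≤ (k + n)! := by exact_mod_cast h
  rw [Nat.factorial_succ, mul_div_assoc', div_le_div_iff₀ (by positivity) (by positivity)]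
  push_cast
  nlinarith [h']

theorem antitone_factorial_ratio (n : ℕ) :
    Antitone fun k : ℕ => (k ! * n ! / (k + n + 1)! : ℝ) * (k + 2) / (k + n + 1) := by
  refine antitone_nat_of_succ_le fun k => ?_
  have hstep : ((k : ℝ) + 1) * (k + 3) / (k + n + 2) ^ 2 ≤ (k + 2) / (k + n + 1) := by
    have hk : (0 : ℝ) ≤ k := k.cast_nonneg
    have hn : (0 : ℝ) ≤ n := n.cast_nonneg
    rw [div_le_div_iff₀ (by positivity) (by positivity)]
    have hk2 : (0 : ℝ) ≤ k + 2 := by linarith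
    have hkn : (0 : ℝ) ≤ k + n + 1 := by linarith
    nlinarith [mul_nonneg (mul_nonneg hk2 hkn) hn]
  calc ((k + 1 : ℕ)! * n ! / (k + 1 + n + 1)! : ℝ) * ((k + 1 : ℕ) + 2) / ((k + 1 : ℕ) + n + 1)
      = (k ! * n ! / (k + n + 1)! : ℝ) * ((k + 1) * (k + 3) / (k + n + 2) ^ 2) := by
        rw [show k + 1 + n + 1 = k + n + 1 + 1 by ring, Nat.factorial_succ (k + n + 1),
          Nat.factorial_succ k]
        push_cast
        field_simp
        ring
    _ ≤ (k ! * n ! / (k + n + 1)! : ℝ) * ((k + 2) / (k + n + 1)) := by gcongr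
    _ = _ := by ring

theorem factorial_ratio_self_le (n : ℕ) (hn : 1 ≤ n) :
    (n ! * n ! / (n + n + 1)! : ℝ) * (n + 2) / (n + n + 1) ≤ eulerBeta n (n + 1) / 2 := by
  have hn' : (1 : ℝ) ≤ n := by exact_mod_cast hn
  calc (n ! * n ! / (n + n + 1)! : ℝ) * (n + 2) / (n + n + 1)
      = (n ! ^ 2 / (2 * n)! : ℝ) * ((n + 2) / (2 * n + 1) ^ 2) := by
        rw [show n + n + 1 = 2 * n + 1 by ring, Nat.factorial_succ]
        push_cast
        field_simp
        ring
    _ ≤ (n ! ^ 2 / (2 * n)! : ℝ) * (1 / (2 * n)) := by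
        refine mul_le_mul_of_nonneg_left ?_ (by positivity)
        rw [div_le_div_iff₀ (by positivity) (by positivity)]
        nlinarith
    _ = eulerBeta n (n + 1) / 2 := by
        rw [eulerBeta_natCast_natCast_add_one]
        field_simp

theorem choose_mul_sq_factorial_div_le (n k : ℕ) (hn : 1 ≤ n) (hk : n ≤ k) :
    (k.choose n : ℝ) * (k ! * n ! / (k + n + 1)!) ^ 2 * (k + 2) ≤ eulerBeta n (n + 1) / 2 := by
  set β : ℝ := k ! * n ! / (k + n + 1)!
  calc (k.choose n : ℝ) * β ^ 2 * (k + 2)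
      = (k.choose n * β * (k + n + 1)) * (β * (k + 2) / (k + n + 1)) := by
        field_simp
    _ ≤ 1 * ((n ! * n ! / (n + n + 1)! : ℝ) * (n + 2) / (n + n + 1)) := by
        have hβ : (k.choose n : ℝ) * β * (k + n + 1) ≤ 1 := by
          have := choose_mul_factorial_div_le k n
          rwa [le_div_iff₀ (by positivity)] at this
        exact mul_le_mul hβ (antitone_factorial_ratio n hk) (by positivity) zero_le_one
    _ ≤ eulerBeta n (n + 1) / 2 := by simpa using factorial_ratio_self_le n hn

end Estimates

section Integrand

/-- The factors of the integrand, for `s = m + 3` variables. -/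
noncomputable def integrandFactor (n : ℕ) (c : ℕ → ℝ) (m : ℕ) : Fin (m + 3) → ℝ → ℝ :=
  Matrix.vecCons (shiftedLegendre n) <| Matrix.vecCons (fun y => (1 - y) ^ n) <|
    Matrix.vecCons (fun y => ∑ i ∈ range (n + 1), c i * y ^ i) fun _ _ => 1

variable (n : ℕ) (c : ℕ → ℝ) (m : ℕ)

theorem continuous_integrandFactor (i : Fin (m + 3)) : Continuous (integrandFactor n c m i) := by
  refine Fin.cases ?_ (Fin.cases ?_ (Fin.cases ?_ fun _ => ?_)) i
  · exact continuous_shiftedLegendre n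
  all_goals simp only [integrandFactor, Matrix.cons_val_succ, Matrix.cons_val_zero]; fun_prop

theorem prod_integrandFactor (x : Fin (m + 3) → ℝ) :
    ∏ i, integrandFactor n c m i (x i)
      = shiftedLegendre n (x 0) * (1 - x 1) ^ n * ∑ i ∈ range (n + 1), c i * x 2 ^ i := by
  simp [integrandFactor, Fin.prod_univ_succ, mul_assoc]

theorem prod_integral_integrandFactor (k : ℕ) :
    ∏ i, ∫ y in (0 : ℝ)..1, integrandFactor n c m i y * y ^ k
      = (∫ y in (0 : ℝ)..1, shiftedLegendre n y * y ^ k) * (∫ y in (0 : ℝ)..1, y ^ k * (1 - y) ^ n)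
        * (∫ y in (0 : ℝ)..1, (∑ i ∈ range (n + 1), c i * y ^ i) * y ^ k)
        * (1 / (k + 1)) ^ m := by
  have hQ : ∫ y in (0 : ℝ)..1, (1 - y) ^ n * y ^ k = ∫ y in (0 : ℝ)..1, y ^ k * (1 - y) ^ n := by
    congr 1 with y
    ring
  simp only [integrandFactor, Fin.prod_univ_succ, Matrix.cons_val_zero, Matrix.cons_val_succ, hQ,
    one_mul, prod_const, card_univ, Fintype.card_fin]
  simp [integral_pow, mul_assoc]

/-- The last factor is `1/(k+1) - 1/(k+2)` for `k ≥ n` and `0` for `k < n`. -/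
theorem abs_prod_integral_integrandFactor_le (hn : 1 ≤ n) {C : ℝ}
    (hC : ∀ j ∈ range (n + 1), |c j| ≤ C) (k : ℕ) :
    |∏ i, ∫ y in (0 : ℝ)..1, integrandFactor n c m i y * y ^ k|
      ≤ C / 2 * eulerBeta n (n + 1) * (n + 1)
        * (1 / ((max k n : ℕ) + 1 : ℝ) - 1 / ((max (k + 1) n : ℕ) + 1 : ℝ)) := by
  rw [prod_integral_integrandFactor, integral_shiftedLegendre_mul_pow,
    integral_pow_mul_one_sub_pow]
  rcases lt_or_ge k n with hk | hk
  · rw [max_eq_right hk.le, max_eq_right (Nat.succ_le_of_lt hk)]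
    simp [Nat.choose_eq_zero_of_lt hk]
  have hC0 : 0 ≤ C := (abs_nonneg _).trans (hC 0 (by simp))
  set β : ℝ := k ! * n ! / (k + n + 1)!
  have hT := abs_integral_sum_mul_pow_le hC k
  have hr : |1 / ((k : ℝ) + 1)| ^ m ≤ 1 := by
    rw [abs_of_pos (by positivity)]
    exact pow_le_one₀ (by positivity) (div_le_one_of_le₀ (by simp) (by positivity))
  rw [max_eq_left hk, max_eq_left (hk.trans k.le_succ)]
  push_cast at hT ⊢
  calc |(-1) ^ n * (k.choose n : ℝ) * β * β
        * (∫ y in (0 : ℝ)..1, (∑ i ∈ range (n + 1), c i * y ^ i) * y ^ k)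
        * (1 / ((k : ℝ) + 1)) ^ m|
      ≤ k.choose n * β * β * (C * (n + 1) / (k + 1)) * 1 := by
        simp only [abs_mul, abs_pow, abs_neg, abs_one, one_pow, one_mul, Nat.abs_cast,
          abs_of_nonneg (show 0 ≤ β by positivity)]
        gcongr
    _ = (C * (n + 1)) * (k.choose n * β ^ 2 * (k + 2)) * (1 / (k + 1) - 1 / (k + 1 + 1)) := by
        field_simp
        ring
    _ ≤ (C * (n + 1)) * (eulerBeta n (n + 1) / 2) * (1 / (k + 1) - 1 / (k + 1 + 1)) := by
        gcongr
        · rw [sub_nonneg]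
          gcongr
          linarith
        · exact choose_mul_sq_factorial_div_le n k hn hk
    _ = _ := by ring

end Integrand

/-- For `n ≥ 1`, `s ≥ 3`, `P_n` the shifted Legendre polynomial, `Q_n(x) = (1-x)^n` and
`T_n(x) = ∑ cᵢ xⁱ` with `c* = max_{0≤i≤n} |cᵢ|`, the `s`-fold integral
`I_s = ∫⋯∫ P_n(x₁)Q_n(x₂)T_n(x₃)/(1-x₁⋯x_s) dx₁⋯dx_s` satisfies
`|I_s| ≤ (c*/2) B(n, n+1)`. -/
theorem stmt_16 (n s : ℕ) (hn : 1 ≤ n) (hs : 3 ≤ s) (c : ℕ → ℝ) :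
    |∫ x in Set.Icc (0 : Fin s → ℝ) 1,
        shiftedLegendre n (x ⟨0, by omega⟩) * (1 - x ⟨1, by omega⟩) ^ n *
          (∑ i ∈ range (n + 1), c i * x ⟨2, by omega⟩ ^ i) /
          (1 - ∏ i, x i)| ≤
      ((range (n + 1)).sup' (by simp) fun i => |c i|) / 2 * eulerBeta n (n + 1) := by
  obtain ⟨m, rfl⟩ : ∃ m, s = m + 3 := ⟨s - 3, by omega⟩
  have hexpand := integral_Icc_prod_div_one_sub_prod (ι := Fin (m + 3)) (by simp)
    fun i => (continuous_integrandFactor n c m i).continuousOn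
  simp only [prod_integrandFactor] at hexpand
  -- `x ⟨2, _⟩` and `x 2` agree only up to unfolding the numeral, hence `trans_le` and not `rw`
  refine (congrArg abs hexpand).trans_le ?_
  set cstar := (range (n + 1)).sup' (by simp) fun i => |c i|
  have hsum := (hasSum_one_div_max_add_one_sub n).mul_left
    (cstar / 2 * eulerBeta n (n + 1) * (n + 1))
  refine (tsum_of_norm_bounded (f := fun k => ∏ i, ∫ y in (0 : ℝ)..1,
    integrandFactor n c m i y * y ^ k) hsum fun k => abs_prod_integral_integrandFactor_le n c m hn
    (fun j hj => le_sup' (fun i => |c i|) hj) k).trans_eq ?_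
  field_simp
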